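/- For the Invincible Fighter (u = 1) and every n ≥ 1, K(n,t) takes every value n, n−1, …, 1 as t ranges from 0 to ∞: for each k ∈ {1, …, n} there exists t ≥ 0 with K(n,t) = k. -/

import Mathlib

/-!
For `u = 1` the value of firing `j` missiles is `a j + N*(n - j, t)`. The sequences `N(·, t)`,
and hence `N*(·, t)`, are concave: `N(m + 1)` is the max-plus convolution of the concave
sequences `a (· + 1)` and `N*(·, t)`, and the smoothing `N ↦ N*` preserves linear inequalities.
So `j ↦ a j + N*(n - j, t)` is unimodal, and its first maximiser is `k < n` as soon as the
marginal gain `a (k + 1) - a k` equals the marginal loss `N*(n - k) - N*(n - k - 1)`. At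
`t = 0` that loss is `0`, and as `t → ∞` it approaches `a 1 > a (k + 1) - a k`, so the
intermediate value theorem gives a balancing time. The case `k = n` is `t = 0`, where `N* = 0`.
-/

open Real MeasureTheory Filter Topology

/-- Auxiliary history-based recursion: `Nhist a u n m t` equals `N(m,t)` when `m ≤ n`. -/
noncomputable def Nhist (a : ℕ → ℝ) (u : ℝ) : ℕ → ℕ → ℝ → ℝ
  | 0, _, _ => 0
  | n + 1, m, t =>
      if m ≤ n then Nhist a u n m t
      else (Finset.Icc 1 (n + 1)).sup'
          (Finset.nonempty_Icc.mpr (Nat.succ_le_succ (Nat.zero_le n)))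
          (fun j => a j + (a j * (1 - u) + u) *
            (Real.exp (-t) * ∫ x in (0:ℝ)..t, Nhist a u n (n + 1 - j) x * Real.exp x))

/-- `Nval a u n t` is `N(n,t)`, the optimal expected number of enemy planes shot down,
with `N(0,t) = 0` and `N(n,t) = max_{1 ≤ j ≤ n} N_n(j,t)`. -/
noncomputable def Nval (a : ℕ → ℝ) (u : ℝ) (n : ℕ) (t : ℝ) : ℝ :=
  Nhist a u n n t

/-- `Nstar a u r t` is `N*(r,t) = e^{-t} ∫_0^t N(r,x) e^x dx` (so `N*(0,t) = 0`). -/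
noncomputable def Nstar (a : ℕ → ℝ) (u : ℝ) (r : ℕ) (t : ℝ) : ℝ :=
  Real.exp (-t) * ∫ x in (0:ℝ)..t, Nval a u r x * Real.exp x

/-- `Nalloc a u n j t` is `N_n(j,t) = a(j) + c(j)·N*(n-j,t)` where `c(j) = a(j)(1-u)+u`. -/
noncomputable def Nalloc (a : ℕ → ℝ) (u : ℝ) (n j : ℕ) (t : ℝ) : ℝ :=
  a j + (a j * (1 - u) + u) * Nstar a u (n - j) t

/-- `Kopt a u n t = min { j ∈ {1,…,n} : N_n(j,t) = N(n,t) }`. -/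
noncomputable def Kopt (a : ℕ → ℝ) (u : ℝ) (n : ℕ) (t : ℝ) : ℕ :=
  sInf {j : ℕ | 1 ≤ j ∧ j ≤ n ∧ Nalloc a u n j t = Nval a u n t}

noncomputable def expSmooth (f : ℝ → ℝ) (t : ℝ) : ℝ :=
  exp (-t) * ∫ x in (0:ℝ)..t, f x * exp x

theorem intervalIntegrable_mul_exp {f : ℝ → ℝ} (hf : Continuous f) (b c : ℝ) :
    IntervalIntegrable (fun x => f x * exp x) volume b c :=
  (hf.mul continuous_exp).intervalIntegrable b c

namespace expSmooth

variable {f g f' g' : ℝ → ℝ} {t : ℝ}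

theorem apply_zero (f : ℝ → ℝ) : expSmooth f 0 = 0 := by
  simp [expSmooth]

theorem _root_.Continuous.expSmooth (hf : Continuous f) : Continuous (expSmooth f) :=
  (continuous_exp.comp continuous_neg).mul
    (intervalIntegral.continuous_primitive (intervalIntegrable_mul_exp hf) 0)

theorem add (hf : Continuous f) (hg : Continuous g) :
    expSmooth (f + g) t = expSmooth f t + expSmooth g t := by
  simp only [expSmooth, Pi.add_apply, add_mul,
    intervalIntegral.integral_add (intervalIntegrable_mul_exp hf 0 t)
      (intervalIntegrable_mul_exp hg 0 t)]
  ring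

theorem const (c t : ℝ) : expSmooth (fun _ => c) t = c * (1 - exp (-t)) := by
  rw [expSmooth, intervalIntegral.integral_const_mul, integral_exp, exp_zero, exp_neg]
  field_simp

theorem mono (hf : Continuous f) (hg : Continuous g) (ht : 0 ≤ t)
    (h : ∀ x ∈ Set.Icc 0 t, f x ≤ g x) : expSmooth f t ≤ expSmooth g t :=
  mul_le_mul_of_nonneg_left
    (intervalIntegral.integral_mono_on ht (intervalIntegrable_mul_exp hf 0 t)
      (intervalIntegrable_mul_exp hg 0 t)
      fun x hx => mul_le_mul_of_nonneg_right (h x hx) (exp_pos x).le)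
    (exp_pos _).le

theorem add_le_add (hf : Continuous f) (hg : Continuous g) (hf' : Continuous f')
    (hg' : Continuous g') (ht : 0 ≤ t) (h : ∀ x ∈ Set.Icc 0 t, f x + g x ≤ f' x + g' x) :
    expSmooth f t + expSmooth g t ≤ expSmooth f' t + expSmooth g' t := by
  rw [← add hf hg, ← add hf' hg']
  exact mono (hf.add hg) (hf'.add hg') ht h

theorem le_of_le {c : ℝ} (hf : Continuous f) (hc : 0 ≤ c) (ht : 0 ≤ t)
    (h : ∀ x ∈ Set.Icc 0 t, f x ≤ c) : expSmooth f t ≤ c :=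
  calc expSmooth f t ≤ expSmooth (fun _ => c) t := mono hf continuous_const ht h
    _ = c * (1 - exp (-t)) := const c t
    _ ≤ c := mul_le_of_le_one_right hc (by linarith [exp_pos (-t)])

/-- The contribution of `[0, T]`, before `f` has reached `c`, is damped by the factor
`exp (-t)`. -/
theorem eventually_lt (hf : Continuous f) {c c' : ℝ} (hc : c' < c)
    (h : ∀ᶠ x in atTop, c ≤ f x) : ∀ᶠ t in atTop, c' < expSmooth f t := by
  obtain ⟨T, hT⟩ := eventually_atTop.mp h
  set A := ∫ x in (0:ℝ)..T, f x * exp x with hA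
  have hbound : ∀ t ≥ T, c + (A - c * exp T) * exp (-t) ≤ expSmooth f t := by
    intro t htT
    have htail : c * (exp t - exp T) ≤ ∫ x in T..t, f x * exp x := by
      rw [← integral_exp, ← intervalIntegral.integral_const_mul]
      exact intervalIntegral.integral_mono_on htT
        ((continuous_exp.const_mul c).intervalIntegrable T t) (intervalIntegrable_mul_exp hf T t)
        fun x hx => mul_le_mul_of_nonneg_right (hT x hx.1) (exp_pos x).le
    have hexp : exp (-t) * exp t = 1 := by rw [← exp_add, neg_add_cancel, exp_zero]
    rw [expSmooth, ← intervalIntegral.integral_add_adjacent_intervals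
      (intervalIntegrable_mul_exp hf 0 T) (intervalIntegrable_mul_exp hf T t), ← hA]
    linear_combination exp (-t) * htail - c * hexp
  have hlim : Tendsto (fun t => c + (A - c * exp T) * exp (-t)) atTop (𝓝 c) := by
    simpa using (tendsto_exp_neg_atTop_nhds_zero.const_mul (A - c * exp T)).const_add c
  filter_upwards [hlim.eventually (lt_mem_nhds hc), eventually_ge_atTop T] with t h1 h2
  exact h1.trans_le (hbound t h2)

end expSmooth

section Sequences

variable {α β h : ℕ → ℝ}

theorem le_mul_of_antitone_sub (h0 : α 0 = 0) (hα : Antitone fun i => α (i + 1) - α i)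
    (j : ℕ) : α j ≤ j * α 1 := by
  induction j with
  | zero => simp [h0]
  | succ j ih =>
    have := hα (Nat.zero_le j)
    simp only [zero_add, h0, sub_zero] at this
    push_cast
    linarith

/-- `hle` and `hex` say that `h m = max_{i ≤ m} (α i + β (m - i))`. -/
theorem sub_le_sub_of_isMaxPlusConv (hα : Antitone fun i => α (i + 1) - α i) {n : ℕ}
    (hβ : AntitoneOn (fun i => β (i + 1) - β i) (Set.Iic (n + 1)))
    (hle : ∀ m i, i ≤ m → α i + β (m - i) ≤ h m)
    (hex : ∀ m, ∃ i ≤ m, h m = α i + β (m - i)) :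
    h (n + 2) - h (n + 1) ≤ h (n + 1) - h n := by
  obtain ⟨i₁, hi₁, e₁⟩ := hex (n + 2)
  obtain ⟨i₂, hi₂, e₂⟩ := hex n
  rcases le_or_gt i₁ i₂ with h12 | h21
  · -- shift one unit of `β` from the larger argument to the smaller one
    have hβ' := hβ (a := n - i₂) (b := n + 1 - i₁) (Set.mem_Iic.2 (by omega))
      (Set.mem_Iic.2 (by omega)) (by omega)
    have u₁ := hle (n + 1) i₁ (by omega)
    have u₂ := hle (n + 1) i₂ (by omega)
    rw [show n + 2 - i₁ = n + 1 - i₁ + 1 by omega] at e₁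
    rw [show n + 1 - i₂ = n - i₂ + 1 by omega] at u₂
    simp only at hβ'
    linarith
  · -- shift one unit of `α` from the larger argument to the smaller one
    obtain ⟨i, rfl⟩ : ∃ i, i₁ = i + 1 := ⟨i₁ - 1, by omega⟩
    have hα' := hα (show i₂ ≤ i by omega)
    have u₁ := hle (n + 1) i (by omega)
    have u₂ := hle (n + 1) (i₂ + 1) (by omega)
    rw [show n + 2 - (i + 1) = n + 1 - i by omega] at e₁
    rw [show n + 1 - (i₂ + 1) = n - i₂ by omega] at u₂
    simp only at hα'
    linarith

theorem le_and_lt_of_balance (hα : StrictAnti fun i => α (i + 1) - α i)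
    (hβ : Antitone fun i => β (i + 1) - β i) {n k : ℕ} (hkn : k < n)
    (hbal : α (k + 1) - α k = β (n - k) - β (n - k - 1)) :
    (∀ j ≤ n, α j + β (n - j) ≤ α k + β (n - k)) ∧
      (∀ j < k, α j + β (n - j) < α k + β (n - k)) := by
  set F : ℕ → ℝ := fun j => α j + β (n - j)
  have hstep : ∀ j < n, F (j + 1) - F j =
      (α (j + 1) - α j) - (β (n - j - 1 + 1) - β (n - j - 1)) := by
    intro j hj
    simp only [F, show n - j - 1 + 1 = n - j by omega, show n - (j + 1) = n - j - 1 by omega]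
    ring
  rw [show n - k = n - k - 1 + 1 by omega, Nat.add_sub_cancel] at hbal
  have hinc : StrictMonoOn F (Set.Iic k) := strictMonoOn_of_lt_add_one Set.ordConnected_Iic
    fun j _ _ hj1 => by
      have := hstep j (by simp at hj1; omega)
      have := hα (show j < k by simpa using hj1)
      have := hβ (show n - k - 1 ≤ n - j - 1 by simp at hj1; omega)
      simp only at *
      linarith
  have hdec : AntitoneOn F (Set.Icc k n) := antitoneOn_of_add_one_le Set.ordConnected_Icc
    fun j _ hj hj1 => by
      have := hstep j (by simp at hj1; omega)
      have := hα.antitone hj.1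
      have := hβ (show n - j - 1 ≤ n - k - 1 by have := hj.1; omega)
      simp only at *
      linarith
  refine ⟨fun j hj => ?_, fun j hj => hinc (Set.mem_Iic.2 hj.le) (Set.mem_Iic.2 le_rfl) hj⟩
  rcases le_total j k with hjk | hkj
  · exact hinc.monotoneOn (Set.mem_Iic.2 hjk) (Set.mem_Iic.2 le_rfl) hjk
  · exact hdec ⟨le_rfl, hkn.le⟩ ⟨hkj, hj⟩ hkj

end Sequences

section Allocation

variable {a : ℕ → ℝ} {u : ℝ}

theorem Nhist_eq_Nval {n m : ℕ} (hm : m ≤ n) (t : ℝ) : Nhist a u n m t = Nval a u m t := by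
  induction n with
  | zero => obtain rfl : m = 0 := Nat.le_zero.mp hm; rfl
  | succ n ih =>
    rcases hm.lt_or_eq with hm | rfl
    · rw [Nhist, if_pos (Nat.lt_succ_iff.mp hm), ih (Nat.lt_succ_iff.mp hm)]
    · rfl

theorem Nval_succ (n : ℕ) (t : ℝ) :
    Nval a u (n + 1) t = (Finset.Icc 1 (n + 1)).sup'
      (Finset.nonempty_Icc.mpr (Nat.succ_le_succ (Nat.zero_le n)))
      (fun j => Nalloc a u (n + 1) j t) := by
  rw [Nval, Nhist, if_neg (by omega)]
  refine Finset.sup'_congr _ rfl fun j hj => ?_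
  simp only [Nalloc, Nstar, Nhist_eq_Nval (show n + 1 - j ≤ n by simp at hj; omega)]

theorem Nalloc_le_Nval {n j : ℕ} (hj : 1 ≤ j) (hjn : j ≤ n) (t : ℝ) :
    Nalloc a u n j t ≤ Nval a u n t := by
  obtain ⟨n, rfl⟩ : ∃ m, n = m + 1 := ⟨n - 1, by omega⟩
  rw [Nval_succ]
  exact Finset.le_sup' (fun j => Nalloc a u (n + 1) j t) (Finset.mem_Icc.mpr ⟨hj, hjn⟩)

theorem exists_Nalloc_eq_Nval {n : ℕ} (hn : 1 ≤ n) (t : ℝ) :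
    ∃ j, 1 ≤ j ∧ j ≤ n ∧ Nalloc a u n j t = Nval a u n t := by
  obtain ⟨n, rfl⟩ : ∃ m, n = m + 1 := ⟨n - 1, by omega⟩
  obtain ⟨j, hj, hmax⟩ := Finset.exists_mem_eq_sup' (Finset.nonempty_Icc.mpr (by omega))
    (fun j => Nalloc a u (n + 1) j t)
  exact ⟨j, (Finset.mem_Icc.mp hj).1, (Finset.mem_Icc.mp hj).2, by rw [Nval_succ, hmax]⟩

theorem Nval_le_of_forall_Nalloc_le {n : ℕ} (hn : 1 ≤ n) {t c : ℝ}
    (h : ∀ j, 1 ≤ j → j ≤ n → Nalloc a u n j t ≤ c) : Nval a u n t ≤ c := by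
  obtain ⟨j, hj, hjn, heq⟩ := exists_Nalloc_eq_Nval (u := u) (a := a) hn t
  exact heq ▸ h j hj hjn

theorem Nstar_eq_expSmooth (r : ℕ) : Nstar a u r = expSmooth (Nval a u r) := rfl

@[simp]
theorem Nstar_zero_left (t : ℝ) : Nstar a u 0 t = 0 := by
  simp [Nstar, Nval, Nhist]

@[simp]
theorem Nstar_zero_right (r : ℕ) : Nstar a u r 0 = 0 :=
  expSmooth.apply_zero _

theorem continuous_Nval (r : ℕ) : Continuous (Nval a u r) := by
  induction r using Nat.strong_induction_on with
  | _ r ih =>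
    obtain _ | n := r
    · exact continuous_const
    · have hsup : Nval a u (n + 1) = fun t => (Finset.Icc 1 (n + 1)).sup'
          (Finset.nonempty_Icc.mpr (Nat.succ_le_succ (Nat.zero_le n)))
          (fun j => Nalloc a u (n + 1) j t) := funext (Nval_succ n)
      rw [hsup]
      refine Continuous.finset_sup'_apply _ fun j hj => ?_
      exact continuous_const.add (continuous_const.mul
        (ih (n + 1 - j) (by simp at hj; omega)).expSmooth)

theorem continuous_Nstar (r : ℕ) : Continuous (Nstar a u r) :=
  (continuous_Nval r).expSmooth

theorem Nstar_sub_le_of_Nval_sub_le {i : ℕ} {t : ℝ} (ht : 0 ≤ t)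
    (h : ∀ x, 0 ≤ x →
      Nval a u (i + 2) x - Nval a u (i + 1) x ≤ Nval a u (i + 1) x - Nval a u i x) :
    Nstar a u (i + 2) t - Nstar a u (i + 1) t ≤ Nstar a u (i + 1) t - Nstar a u i t := by
  have := expSmooth.add_le_add (continuous_Nval (i + 2)) (continuous_Nval i)
    (continuous_Nval (i + 1)) (continuous_Nval (i + 1)) ht fun x hx => by linarith [h x hx.1]
  simp only [Nstar_eq_expSmooth] at this ⊢
  linarith

theorem Kopt_eq_of_forall {n k : ℕ} {t : ℝ} (hk : 1 ≤ k) (hkn : k ≤ n)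
    (hle : ∀ j, 1 ≤ j → j ≤ n → Nalloc a u n j t ≤ Nalloc a u n k t)
    (hlt : ∀ j, 1 ≤ j → j < k → Nalloc a u n j t < Nalloc a u n k t) :
    Kopt a u n t = k := by
  have hval : Nalloc a u n k t = Nval a u n t :=
    le_antisymm (Nalloc_le_Nval hk hkn t) (Nval_le_of_forall_Nalloc_le (hk.trans hkn) hle)
  refine le_antisymm (Nat.sInf_le ⟨hk, hkn, hval⟩) (le_csInf ⟨k, hk, hkn, hval⟩ ?_)
  rintro j ⟨hj, -, hjval⟩
  by_contra! hjk
  exact (hlt j hj hjk).ne (hjval.trans hval.symm)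

end Allocation

namespace Invincible

variable {a : ℕ → ℝ}

theorem Nalloc_eq (n j : ℕ) (t : ℝ) : Nalloc a 1 n j t = a j + Nstar a 1 (n - j) t := by
  simp [Nalloc]

theorem Nalloc_succ_succ (m i : ℕ) (t : ℝ) :
    Nalloc a 1 (m + 1) (i + 1) t = a (i + 1) + Nstar a 1 (m - i) t := by
  rw [Nalloc_eq, Nat.add_sub_add_right]

theorem Nval_le (ha0 : a 0 = 0) (ha1 : 0 ≤ a 1) (hd : Antitone fun i => a (i + 1) - a i)
    (r : ℕ) {t : ℝ} (ht : 0 ≤ t) : Nval a 1 r t ≤ r * a 1 := by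
  induction r using Nat.strong_induction_on generalizing t with
  | _ r ih =>
    obtain _ | n := r
    · simp [Nval, Nhist]
    refine Nval_le_of_forall_Nalloc_le (Nat.succ_pos n) fun j hj hjn => ?_
    have hstar : Nstar a 1 (n + 1 - j) t ≤ (n + 1 - j : ℕ) * a 1 :=
      expSmooth.le_of_le (continuous_Nval _) (by positivity) ht
        fun x hx => ih (n + 1 - j) (by omega) hx.1
    rw [Nat.cast_sub hjn] at hstar
    rw [Nalloc_eq]
    push_cast at hstar ⊢
    linarith [le_mul_of_antitone_sub ha0 hd j]

theorem Nstar_le (ha0 : a 0 = 0) (ha1 : 0 ≤ a 1) (hd : Antitone fun i => a (i + 1) - a i)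
    (r : ℕ) {t : ℝ} (ht : 0 ≤ t) : Nstar a 1 r t ≤ r * a 1 :=
  expSmooth.le_of_le (continuous_Nval r) (by positivity) ht
    fun _ hx => Nval_le ha0 ha1 hd r hx.1

/-- The allocation `j = 1` gives `N(r + 1) ≥ a 1 + N*(r)`. -/
theorem eventually_lt_Nstar (r : ℕ) {c : ℝ} (hc : c < r * a 1) :
    ∀ᶠ t in atTop, c < Nstar a 1 r t := by
  induction r generalizing c with
  | zero => exact Eventually.of_forall fun t => by simpa using hc
  | succ r ih =>
    obtain ⟨c', hcc', hc'⟩ := exists_between hc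
    have hval : ∀ᶠ x in atTop, c' ≤ Nval a 1 (r + 1) x := by
      filter_upwards [ih (c := c' - a 1) (by push_cast at hc'; linarith)] with x hx
      have := Nalloc_le_Nval (a := a) (u := 1) (le_refl 1) (show 1 ≤ r + 1 by omega) x
      rw [Nalloc_eq, Nat.add_sub_cancel] at this
      linarith
    exact expSmooth.eventually_lt (continuous_Nval _) hcc' hval

theorem Nval_sub_le (ha0 : a 0 = 0) (ha1 : 0 ≤ a 1) (hd : Antitone fun i => a (i + 1) - a i)
    (n : ℕ) {t : ℝ} (ht : 0 ≤ t) :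
    Nval a 1 (n + 2) t - Nval a 1 (n + 1) t ≤ Nval a 1 (n + 1) t - Nval a 1 n t := by
  induction n using Nat.strong_induction_on generalizing t with
  | _ n ih =>
    obtain _ | m := n
    · have h2 := Nval_le ha0 ha1 hd 2 ht
      have h1 := Nalloc_le_Nval (a := a) (u := 1) (le_refl 1) (le_refl 1) t
      simp only [Nalloc_eq, Nat.sub_self, Nstar_zero_left, add_zero] at h1
      have h0 : Nval a 1 0 t = 0 := rfl
      push_cast at h2
      linarith
    -- `N(m + 1)` is the max-plus convolution of `i ↦ a (i + 1)` and `N*`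
    refine sub_le_sub_of_isMaxPlusConv (α := fun i => a (i + 1))
      (β := fun i => Nstar a 1 i t) (h := fun m => Nval a 1 (m + 1) t) (n := m)
      (fun i j hij => hd (Nat.succ_le_succ hij))
      (antitoneOn_of_add_one_le Set.ordConnected_Iic fun i _ _ hi => ?_)
      (fun k i hik => ?_) (fun k => ?_)
    · exact Nstar_sub_le_of_Nval_sub_le ht fun x hx => ih i (by simp at hi; omega) hx
    · simpa only [Nalloc_succ_succ] using Nalloc_le_Nval (a := a) (u := 1)
        (Nat.succ_pos i) (Nat.succ_le_succ hik) t
    · obtain ⟨j, hj, hjk, heq⟩ := exists_Nalloc_eq_Nval (a := a) (u := 1) (Nat.succ_pos k) t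
      obtain ⟨i, rfl⟩ : ∃ i, j = i + 1 := ⟨j - 1, by omega⟩
      exact ⟨i, by omega, by simp only [← heq, Nalloc_succ_succ]⟩

theorem antitone_Nstar_sub (ha0 : a 0 = 0) (ha1 : 0 ≤ a 1)
    (hd : Antitone fun i => a (i + 1) - a i) {t : ℝ} (ht : 0 ≤ t) :
    Antitone fun i => Nstar a 1 (i + 1) t - Nstar a 1 i t :=
  antitone_nat_of_succ_le fun i =>
    Nstar_sub_le_of_Nval_sub_le ht fun _ hx => Nval_sub_le ha0 ha1 hd i hx

theorem Kopt_zero (hmono : StrictMono a) {n : ℕ} (hn : 1 ≤ n) : Kopt a 1 n 0 = n :=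
  Kopt_eq_of_forall hn le_rfl
    (fun j _ hjn => by simpa [Nalloc_eq] using hmono.monotone hjn)
    (fun j _ hjn => by simpa [Nalloc_eq] using hmono hjn)

theorem exists_balance (ha0 : a 0 = 0) (hmono : StrictMono a)
    (hd : StrictAnti fun i => a (i + 1) - a i) {n k : ℕ} (hk : 1 ≤ k) (hkn : k < n) :
    ∃ t, 0 ≤ t ∧ a (k + 1) - a k = Nstar a 1 (n - k) t - Nstar a 1 (n - k - 1) t := by
  set g := fun t => Nstar a 1 (n - k) t - Nstar a 1 (n - k - 1) t
  have ha1 : 0 ≤ a 1 := ha0 ▸ (hmono zero_lt_one).le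
  have hgap : a (k + 1) - a k < a 1 := by simpa [ha0] using hd (show 0 < k by omega)
  have hcast : ((n - k : ℕ) : ℝ) = (n - k - 1 : ℕ) + 1 := by
    rw [← Nat.cast_add_one, Nat.sub_add_cancel (by omega)]
  obtain ⟨T, hlarge, hT⟩ := ((eventually_lt_Nstar (a := a) (n - k)
    (c := (n - k - 1 : ℕ) * a 1 + (a (k + 1) - a k)) (by rw [hcast]; linarith)).and
      (eventually_ge_atTop 0)).exists
  have hgT : a (k + 1) - a k ≤ g T := by
    linarith [Nstar_le ha0 ha1 hd.antitone (n - k - 1) hT]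
  have hg0 : g 0 ≤ a (k + 1) - a k := by
    simpa [g] using (hmono (Nat.lt_succ_self k)).le
  obtain ⟨t, ht, hgt⟩ := intermediate_value_Icc hT
    ((continuous_Nstar _).sub (continuous_Nstar _)).continuousOn ⟨hg0, hgT⟩
  exact ⟨t, ht.1, hgt.symm⟩

theorem Kopt_eq_of_balance (ha0 : a 0 = 0) (ha1 : 0 ≤ a 1)
    (hd : StrictAnti fun i => a (i + 1) - a i) {n k : ℕ} (hk : 1 ≤ k) (hkn : k < n) {t : ℝ}
    (ht : 0 ≤ t) (hbal : a (k + 1) - a k = Nstar a 1 (n - k) t - Nstar a 1 (n - k - 1) t) :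
    Kopt a 1 n t = k := by
  obtain ⟨hle, hlt⟩ := le_and_lt_of_balance (β := fun i => Nstar a 1 i t) hd
    (antitone_Nstar_sub ha0 ha1 hd.antitone ht) hkn hbal
  exact Kopt_eq_of_forall hk hkn.le (fun j _ hjn => by simpa only [Nalloc_eq] using hle j hjn)
    (fun j _ hjk => by simpa only [Nalloc_eq] using hlt j hjk)

end Invincible

theorem invincible_K_all_values_general
    (a : ℕ → ℝ) (ha0 : a 0 = 0)
    (hmono : StrictMono a)
    (hconc : ∀ j : ℕ, a (j + 2) - a (j + 1) < a (j + 1) - a j) :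
    ∀ n : ℕ, 1 ≤ n → ∀ k : ℕ, 1 ≤ k → k ≤ n →
      ∃ t : ℝ, 0 ≤ t ∧ Kopt a 1 n t = k := by
  intro n hn k hk hkn
  have hd : StrictAnti fun i => a (i + 1) - a i := strictAnti_nat_of_succ_lt hconc
  have ha1 : 0 ≤ a 1 := ha0 ▸ (hmono zero_lt_one).le
  rcases hkn.eq_or_lt with rfl | hkn
  · exact ⟨0, le_rfl, Invincible.Kopt_zero hmono hn⟩
  · obtain ⟨t, ht, hbal⟩ := Invincible.exists_balance ha0 hmono hd hk hkn
    exact ⟨t, ht, Invincible.Kopt_eq_of_balance ha0 ha1 hd hk hkn ht hbal⟩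

/-- Theorem 4.3: for the Invincible Fighter (`u = 1`) and every `n ≥ 1`, `K(n,t)` takes
every value `k ∈ {1,…,n}` as `t` ranges over `[0,∞)`. -/
theorem invincible_K_all_values
    (a : ℕ → ℝ) (haI : ∀ j, a j ∈ Set.Icc (0:ℝ) 1) (ha0 : a 0 = 0)
    (hmono : StrictMono a)
    (hconc : ∀ j : ℕ, a (j + 2) - a (j + 1) < a (j + 1) - a j) :
    ∀ n : ℕ, 1 ≤ n → ∀ k : ℕ, 1 ≤ k → k ≤ n →
      ∃ t : ℝ, 0 ≤ t ∧ Kopt a 1 n t = k :=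
  invincible_K_all_values_general a ha0 hmono hconc
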